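/- For the Undecided-State Dynamics, let c = (c_1,...,c_k) be the current color configuration with q undecided nodes and set δ = q − n/2. Then the conditional expectations after one round satisfy: (i) E[C_i' | c] = (1 + (2δ + c_i)/n)·c_i = c_i·(c_i + 2q)/n for every color i; (ii) E[Q' | c] = (q² + Σ_{i≠j} c_i c_j)/n; and consequently (iii) E[Q' − n/2 | c] = (1/n)·(2δ² − Σ_{j=1}^k c_j²). -/

import Mathlib

open Finset

/-- A state of the Undecided-State Dynamics: each of the `n` nodes is either
undecided (`none`) or supports one of `k` colors. -/
abbrev Config (n k : ℕ) := Fin n → Option (Fin k)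

/-- Number of nodes supporting color `i`. -/
def colorCount {n k : ℕ} (σ : Config n k) (i : Fin k) : ℕ :=
  (Finset.univ.filter fun v => σ v = some i).card

/-- Number of undecided nodes. -/
def undecidedCount {n k : ℕ} (σ : Config n k) : ℕ :=
  (Finset.univ.filter fun v => σ v = none).card

/-- Update rule for one node: an undecided node adopts the sampled state; a colored
node keeps its color iff the sampled node does not support a different color. -/
def updateNode {k : ℕ} : Option (Fin k) → Option (Fin k) → Option (Fin k)
  | none, s => s
  | some c, none => some c
  | some c, some c' => if c' = c then some c else none

/-- Apply one synchronous round given the samples `s` of all nodes. -/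
def applySample {n k : ℕ} (σ : Config n k) (s : Fin n → Fin n) : Config n k :=
  fun v => updateNode (σ v) (σ (s v))

/-- One round of the Undecided-State Dynamics: every node independently samples a
uniformly random node. -/
noncomputable def step {n k : ℕ} [NeZero n] (σ : Config n k) : PMF (Config n k) :=
  (PMF.uniformOfFintype (Fin n → Fin n)).map (applySample σ)

/-- Distribution of the configuration after `t` rounds, starting from `σ`. -/
noncomputable def process {n k : ℕ} [NeZero n] (σ : Config n k) : ℕ → PMF (Config n k)
  | 0 => PMF.pure σ
  | t + 1 => (process σ t).bind step

/-- Joint distribution of the whole trajectory of the first `t` rounds (most recent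
configuration first). -/
noncomputable def pathProcess {n k : ℕ} [NeZero n] (σ : Config n k) :
    ℕ → PMF (List (Config n k))
  | 0 => PMF.pure [σ]
  | t + 1 => (pathProcess σ t).bind fun l => (step l.headI).map fun τ => τ :: l

/-- Probability of an event under a PMF. -/
noncomputable def pr {α : Type*} (p : PMF α) (E : Set α) : ENNReal := p.toOuterMeasure E

/-- Expected value of `f` after one round of the dynamics starting from `σ`. -/
noncomputable def expv {n k : ℕ} [NeZero n] (σ : Config n k) (f : Config n k → ℝ) : ℝ :=
  ∑ τ : Config n k, ((step σ) τ).toReal * f τ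

/-- Size `c₁` of the plurality (largest) color class. -/
def plur {n k : ℕ} (σ : Config n k) : ℕ := Finset.univ.sup (colorCount σ)

/-- Monochromatic distance `md(c) = ∑ᵢ (cᵢ/c₁)²`. -/
noncomputable def md {n k : ℕ} (σ : Config n k) : ℝ :=
  ∑ i : Fin k, ((colorCount σ i : ℝ) / (plur σ : ℝ)) ^ 2

/-- `R(c) = (∑ᵢ cᵢ)/c₁ = (n − q)/c₁`. -/
noncomputable def Rval {n k : ℕ} (σ : Config n k) : ℝ :=
  ((n : ℝ) - (undecidedCount σ : ℝ)) / (plur σ : ℝ)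

/-- The process has converged: all `n` nodes support one and the same color. -/
def mono {n k : ℕ} (σ : Config n k) : Prop := ∃ i : Fin k, ∀ v : Fin n, σ v = some i

/-! Each node samples a uniform node, so by linearity of expectation the expected number of
nodes whose new state has some property is `1/n` times the number of ordered pairs `(v, u)`
for which `updateNode (σ v) (σ u)` has it. Grouping the pairs by the states of `v` and `u`:
a node has color `i` afterwards if it was undecided and samples `i` (`q cᵢ` pairs) or had
color `i` and samples `i` or an undecided node (`cᵢ (cᵢ + q)` pairs); it is undecided
afterwards if both were undecided (`q²` pairs) or it samples a color other than its own
(`∑_{i ≠ j} cᵢ cⱼ` pairs). Part (iii) follows from (ii) since `∑ᵢ cᵢ = n - q`. -/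

theorem PMF.sum_toReal_map_uniformOfFintype_mul {α β : Type*} [Fintype α] [Nonempty α]
    [Fintype β] (g : α → β) (f : β → ℝ) :
    ∑ b, ((PMF.uniformOfFintype α).map g b).toReal * f b =
      (∑ a, f (g a)) / Fintype.card α := by
  classical
  have hmass : ∀ b, ((PMF.uniformOfFintype α).map g b).toReal =
      ∑ a, if b = g a then (Fintype.card α : ℝ)⁻¹ else 0 := fun b => by
    rw [PMF.map_apply, tsum_fintype, ENNReal.toReal_sum fun a _ => by split_ifs <;> simp]
    refine Finset.sum_congr rfl fun a _ => ?_
    split_ifs <;> simp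
  simp_rw [hmass, Finset.sum_mul, ite_mul, zero_mul]
  rw [Finset.sum_comm, Finset.sum_div]
  simp [div_eq_inv_mul]

theorem Fintype.card_mul_sum_comp_eval {ι α : Type*} [Fintype ι] [DecidableEq ι] [Fintype α]
    (i : ι) (g : α → ℝ) :
    Fintype.card α * ∑ s : ι → α, g (s i) = Fintype.card (ι → α) * ∑ a, g a := by
  have hsplit : ∑ s : ι → α, g (s i) = ∑ p : α × ({j // j ≠ i} → α), g p.1 :=
    Fintype.sum_equiv (Equiv.piSplitAt i fun _ => α) _ _ fun _ => rfl
  rw [hsplit, Fintype.sum_prod_type, Fintype.card_congr (Equiv.piSplitAt i fun _ => α)]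
  simp only [Finset.sum_const, Finset.card_univ, nsmul_eq_mul, Fintype.card_prod, Nat.cast_mul,
    ← Finset.mul_sum]
  ring

theorem Finset.sum_sum_erase_mul {ι R : Type*} [DecidableEq ι] [CommRing R] (s : Finset ι)
    (f : ι → R) :
    ∑ i ∈ s, ∑ j ∈ s.erase i, f i * f j = (∑ i ∈ s, f i) ^ 2 - ∑ i ∈ s, f i ^ 2 := by
  have : ∀ i ∈ s, ∑ j ∈ s.erase i, f i * f j = f i * ∑ j ∈ s, f j - f i ^ 2 := fun i hi => by
    rw [← Finset.mul_sum, Finset.sum_erase_eq_sub hi]; ring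
  rw [Finset.sum_congr rfl this, Finset.sum_sub_distrib, ← Finset.sum_mul, sq]

section
variable {n k : ℕ}

theorem sum_comp_eq_undecidedCount_mul_add (σ : Config n k) (h : Option (Fin k) → ℝ) :
    ∑ v, h (σ v) = undecidedCount σ * h none + ∑ i, colorCount σ i * h (some i) := by
  rw [← Finset.sum_fiberwise' Finset.univ σ h, Fintype.sum_option]
  simp only [Finset.sum_const, nsmul_eq_mul]
  rfl

theorem undecidedCount_add_sum_colorCount (σ : Config n k) :
    undecidedCount σ + ∑ i, colorCount σ i = n := by
  have := sum_comp_eq_undecidedCount_mul_add σ fun _ => 1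
  simp only [mul_one, Finset.sum_const, Finset.card_univ, Fintype.card_fin, nsmul_eq_mul] at this
  exact_mod_cast this.symm

theorem colorCount_eq_sum_ite (σ : Config n k) (i : Fin k) :
    (colorCount σ i : ℝ) = ∑ v, if σ v = some i then 1 else 0 := by
  rw [Finset.sum_boole]; rfl

theorem undecidedCount_eq_sum_ite (σ : Config n k) :
    (undecidedCount σ : ℝ) = ∑ v, if σ v = none then 1 else 0 := by
  rw [Finset.sum_boole]; rfl

variable [NeZero n]

theorem expv_eq_sum_div (σ : Config n k) (f : Config n k → ℝ) :
    expv σ f = (∑ s, f (applySample σ s)) / Fintype.card (Fin n → Fin n) :=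
  PMF.sum_toReal_map_uniformOfFintype_mul _ f

theorem expv_sub_const (σ : Config n k) (f : Config n k → ℝ) (a : ℝ) :
    expv σ (fun τ => f τ - a) = expv σ f - a := by
  have hcard : (Fintype.card (Fin n → Fin n) : ℝ) ≠ 0 := Nat.cast_ne_zero.2 Fintype.card_ne_zero
  rw [expv_eq_sum_div, expv_eq_sum_div, Finset.sum_sub_distrib, Finset.sum_const,
    Finset.card_univ, nsmul_eq_mul, sub_div, mul_div_cancel_left₀ _ hcard]

theorem expv_sum_apply (σ : Config n k) (h : Option (Fin k) → ℝ) :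
    expv σ (fun τ => ∑ v, h (τ v)) = (∑ v, ∑ u, h (updateNode (σ v) (σ u))) / n := by
  have hn : (n : ℝ) ≠ 0 := Nat.cast_ne_zero.2 (NeZero.ne n)
  have hcard : (Fintype.card (Fin n → Fin n) : ℝ) ≠ 0 := Nat.cast_ne_zero.2 Fintype.card_ne_zero
  rw [expv_eq_sum_div, Finset.sum_comm, Finset.sum_div, Finset.sum_div]
  refine Finset.sum_congr rfl fun v _ => ?_
  rw [div_eq_div_iff hcard hn]
  simpa [applySample, mul_comm] using
    Fintype.card_mul_sum_comp_eval (α := Fin n) v fun u => h (updateNode (σ v) (σ u))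

theorem expv_colorCount (σ : Config n k) (i : Fin k) :
    expv σ (fun τ => (colorCount τ i : ℝ)) =
      colorCount σ i * (colorCount σ i + 2 * undecidedCount σ) / n := by
  conv_lhs => simp only [colorCount_eq_sum_ite]
  rw [expv_sum_apply σ fun o => if o = some i then 1 else 0,
    sum_comp_eq_undecidedCount_mul_add σ fun a => ∑ u, if updateNode a (σ u) = some i then 1 else 0]
  simp only [fun a => sum_comp_eq_undecidedCount_mul_add σ
    fun b => if updateNode a b = some i then (1 : ℝ) else 0]
  simp [updateNode, ite_and, ite_add_ite]
  ring

theorem expv_undecidedCount (σ : Config n k) :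
    expv σ (fun τ => (undecidedCount τ : ℝ)) =
      (undecidedCount σ ^ 2 +
        ∑ i, ∑ j ∈ Finset.univ.erase i, (colorCount σ i : ℝ) * colorCount σ j) / n := by
  conv_lhs => simp only [undecidedCount_eq_sum_ite]
  rw [expv_sum_apply σ fun o => if o = none then 1 else 0,
    sum_comp_eq_undecidedCount_mul_add σ fun a => ∑ u, if updateNode a (σ u) = none then 1 else 0]
  simp only [fun a => sum_comp_eq_undecidedCount_mul_add σ
    fun b => if updateNode a b = none then (1 : ℝ) else 0]
  simp [updateNode, ← Finset.mul_sum, Finset.sum_ite, Finset.filter_ne', sq]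

end

/-- One-round conditional expectations for the Undecided-State
Dynamics: with `δ = q - n/2`, (i) `E[Cᵢ' | c] = (1 + (2δ + cᵢ)/n) cᵢ
= cᵢ (cᵢ + 2q)/n` for every color `i`; (ii) `E[Q' | c] = (q² + ∑_{i≠j} cᵢ cⱼ)/n`;
(iii) `E[Q' - n/2 | c] = (1/n)(2δ² - ∑ⱼ cⱼ²)`. -/
theorem one_round_expectations (n k : ℕ) [NeZero n] (σ : Config n k) :
    (∀ i : Fin k,
      expv σ (fun τ => (colorCount τ i : ℝ)) =
        (1 + (2 * ((undecidedCount σ : ℝ) - (n : ℝ) / 2) + (colorCount σ i : ℝ)) / n) *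
          (colorCount σ i : ℝ) ∧
      expv σ (fun τ => (colorCount τ i : ℝ)) =
        (colorCount σ i : ℝ) * ((colorCount σ i : ℝ) + 2 * (undecidedCount σ : ℝ)) / n) ∧
    expv σ (fun τ => (undecidedCount τ : ℝ)) =
      ((undecidedCount σ : ℝ) ^ 2 +
        ∑ i : Fin k, ∑ j ∈ Finset.univ.erase i, (colorCount σ i : ℝ) * (colorCount σ j : ℝ)) / n ∧
    expv σ (fun τ => (undecidedCount τ : ℝ) - (n : ℝ) / 2) =
      (1 / n) * (2 * ((undecidedCount σ : ℝ) - (n : ℝ) / 2) ^ 2 -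
        ∑ j : Fin k, (colorCount σ j : ℝ) ^ 2) := by
  have hn : (n : ℝ) ≠ 0 := Nat.cast_ne_zero.2 (NeZero.ne n)
  have hcolored : ∑ i, (colorCount σ i : ℝ) = n - undecidedCount σ := by
    have := undecidedCount_add_sum_colorCount σ
    rify at this
    linarith
  refine ⟨fun i => ⟨?_, expv_colorCount σ i⟩, expv_undecidedCount σ, ?_⟩
  · rw [expv_colorCount]
    field_simp
    ring
  · rw [expv_sub_const, expv_undecidedCount, Finset.sum_sum_erase_mul, hcolored]
    field_simp
    ring
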